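/- (Input-to-state estimate for delayed linear time-varying systems via contraction.) Let τ_max ≥ 0 be finite, let τ : [t₀,∞) → [0, τ_max], and let e : [t₀ − τ_max, ∞) → ℝ^m be continuous, bounded on [t₀ − τ_max, t₀], differentiable on [t₀, ∞), and satisfy ė(t) = A(t)e(t) + B(t)e(t − τ(t)) + w(t) for all t ≥ t₀, where A(t), B(t) ∈ ℝ^{m×m} and w : [t₀,∞) → ℝ^m is bounded. Let |·| be a norm on ℝ^m with induced matrix norm ‖·‖ and matrix measure μ, and suppose there exist 0 ≤ σ̲ < σ̄ < ∞ such that μ(A(t)) ≤ −σ̄ and ‖B(t)‖ ≤ σ̲ for all t ≥ t₀. Then for all t ≥ t₀, |e(t)| ≤ (sup_{t₀ − τ_max ≤ s ≤ t₀} |e(s)|)·e^{−λ̂(t−t₀)} + (sup_{s ≥ t₀} |w(s)|)/(σ̄ − σ̲), where λ̂ := inf_{t ≥ t₀} { λ : λ − σ̄ + σ̲·e^{λτ(t)} = 0, λ > 0 } is positive. -/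

import Mathlib

open Filter Set

/-- `ν` is a norm on the real vector space `E`. -/
def IsNorm {E : Type*} [AddCommGroup E] [Module ℝ E] (ν : E → ℝ) : Prop :=
  (∀ x, 0 ≤ ν x) ∧ (∀ x, ν x = 0 → x = 0) ∧
  (∀ (a : ℝ) (x : E), ν (a • x) = |a| * ν x) ∧
  (∀ x y : E, ν (x + y) ≤ ν x + ν y)

/-- The operator norm of a map `L` with respect to a norm `νE` on the domain and a norm
`νF` on the codomain: the supremum of `νF (L x)` over the unit sphere `νE x = 1`. -/
noncomputable def opNorm {E F : Type*} (νE : E → ℝ) (νF : F → ℝ) (L : E → F) : ℝ :=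
  sSup {c | ∃ x, νE x = 1 ∧ c = νF (L x)}

/-- `μ` is the matrix measure (logarithmic norm) of the linear map `L` with respect to the
norm `ν`, i.e. `μ = lim_{h→0⁺} (‖I + hL‖ − 1)/h` where `‖·‖` is the operator norm
induced by `ν`. -/
def HasMatMeasure {E : Type*} [Add E] [SMul ℝ E] (ν : E → ℝ) (L : E → E) (μ : ℝ) : Prop :=
  Tendsto (fun h : ℝ => (opNorm ν ν (fun x => x + h • L x) - 1) / h)
    (nhdsWithin (0 : ℝ) (Set.Ioi 0)) (nhds μ)

/-!
Coppel's inequality: since `e s = e t + (s - t) • ė(t) + o(s - t)` and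
`ν (x + h • A x) ≤ ‖I + h A‖ ν x = (1 + h μ(A) + o(h)) ν x`, the upper right Dini derivative of
`V = ν ∘ e` satisfies `D⁺V(t) ≤ -σ̄ V(t) + σ̲ V(t - τ(t)) + W` with `W = sup ν(w)`. The matrix
measure `μ(A)` exists because `h ↦ ‖I + h A‖` is convex with value `1` at `0`, so its difference
quotient is monotone on `h > 0` and bounded below by `-‖A‖`.

Halanay's argument compares `V` with `φ(t) = M e^{-λ̂(t - t₀)} + W / (σ̄ - σ̲) + ε`, where `M`
bounds `V` on the initial interval. At the first time `V` touches `φ`, the delayed value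
`V(t - τ(t))` is still below `φ(t - τ(t))`, and because `λ̂ ≤ λ(t)` gives
`σ̲ e^{λ̂ τ(t)} ≤ σ̄ - λ̂`, the Dini bound is strictly smaller than `φ'(t)`; so `V` never crosses
`φ`, and `ε → 0` gives the estimate. The roots `λ(t)` are bounded away from `0` uniformly in the
delay because `λ ↦ λ - σ̄ + σ̲ e^{λ τ_max}` is negative near `0` and dominates
`λ ↦ λ - σ̄ + σ̲ e^{λ τ(t)}` for `λ > 0`; hence `λ̂ > 0`.
-/

open Topology

namespace IsNorm

variable {E : Type*}

section Algebraic

variable [AddCommGroup E] [Module ℝ E] {ν : E → ℝ}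

protected lemma nonneg (hν : IsNorm ν) (x : E) : 0 ≤ ν x := hν.1 x

lemma add_le (hν : IsNorm ν) (x y : E) : ν (x + y) ≤ ν x + ν y := hν.2.2.2 x y

def toSeminorm (hν : IsNorm ν) : Seminorm ℝ E :=
  Seminorm.of ν hν.add_le fun a x => by rw [hν.2.2.1, Real.norm_eq_abs]

@[simp]
lemma coe_toSeminorm (hν : IsNorm ν) : ⇑hν.toSeminorm = ν := rfl

lemma map_zero (hν : IsNorm ν) : ν 0 = 0 := _root_.map_zero hν.toSeminorm

lemma map_smul_of_nonneg (hν : IsNorm ν) {a : ℝ} (ha : 0 ≤ a) (x : E) :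
    ν (a • x) = a * ν x := by
  rw [hν.2.2.1, abs_of_nonneg ha]

lemma pos_of_ne_zero (hν : IsNorm ν) {x : E} (hx : x ≠ 0) : 0 < ν x :=
  (hν.nonneg x).lt_of_ne' fun h => hx (hν.2.1 x h)

lemma exists_eq_one [Nontrivial E] (hν : IsNorm ν) : ∃ u, ν u = 1 := by
  obtain ⟨x, hx⟩ := exists_ne (0 : E)
  refine ⟨(ν x)⁻¹ • x, ?_⟩
  rw [hν.map_smul_of_nonneg (inv_nonneg.2 (hν.nonneg x)),
    inv_mul_cancel₀ (hν.pos_of_ne_zero hx).ne']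

lemma opNorm_le [Nontrivial E] (hν : IsNorm ν) {f : E → E} {b : ℝ}
    (h : ∀ x, ν x = 1 → ν (f x) ≤ b) : opNorm ν ν f ≤ b := by
  obtain ⟨u, hu⟩ := hν.exists_eq_one
  refine csSup_le ⟨_, u, hu, rfl⟩ ?_
  rintro _ ⟨x, hx, rfl⟩
  exact h x hx

end Algebraic

variable [NormedAddCommGroup E] [NormedSpace ℝ E] [FiniteDimensional ℝ E] {ν : E → ℝ}

protected lemma continuous (hν : IsNorm ν) : Continuous ν :=
  hν.toSeminorm.convexOn.locallyLipschitz.continuous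

lemma exists_pos_mul_norm_le (hν : IsNorm ν) : ∃ c > 0, ∀ x, c * ‖x‖ ≤ ν x := by
  rcases subsingleton_or_nontrivial E with hE | hE
  · exact ⟨1, one_pos, fun x => by simp [Subsingleton.elim x 0, hν.map_zero]⟩
  obtain ⟨z, hz, hmin⟩ := (isCompact_sphere (0 : E) 1).exists_isMinOn
    (NormedSpace.sphere_nonempty.2 zero_le_one) hν.continuous.continuousOn
  have hz0 : z ≠ 0 := ne_zero_of_mem_unit_sphere ⟨z, hz⟩
  refine ⟨ν z, hν.pos_of_ne_zero hz0, fun x => ?_⟩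
  rcases eq_or_ne x 0 with rfl | hx
  · simp [hν.map_zero]
  have hx' : 0 < ‖x‖ := norm_pos_iff.2 hx
  have hle : ν z ≤ ν (‖x‖⁻¹ • x) := hmin (by simp [norm_smul, hx'.ne'])
  rw [hν.map_smul_of_nonneg (inv_nonneg.2 hx'.le)] at hle
  calc ν z * ‖x‖ ≤ ‖x‖⁻¹ * ν x * ‖x‖ := by gcongr
    _ = ν x := by field_simp

lemma isCompact_setOf_eq_one (hν : IsNorm ν) : IsCompact {x | ν x = 1} := by
  obtain ⟨c, hc, hcle⟩ := hν.exists_pos_mul_norm_le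
  refine Metric.isCompact_of_isClosed_isBounded (isClosed_eq hν.continuous continuous_const)
    ((Metric.isBounded_closedBall (x := (0 : E)) (r := c⁻¹)).subset fun x (hx : ν x = 1) => ?_)
  rw [mem_closedBall_zero_iff, ← mul_le_mul_iff_of_pos_left hc, mul_inv_cancel₀ hc.ne']
  exact hx ▸ hcle x

lemma le_opNorm (hν : IsNorm ν) (L : E →ₗ[ℝ] E) (x : E) :
    ν (L x) ≤ opNorm ν ν L * ν x := by
  rcases eq_or_ne x 0 with rfl | hx
  · simp [hν.map_zero]
  have hbdd : BddAbove {c | ∃ x, ν x = 1 ∧ c = ν (L x)} :=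
    (hν.isCompact_setOf_eq_one.image (hν.continuous.comp L.continuous_of_finiteDimensional)
      ).bddAbove.mono <| by rintro _ ⟨y, hy, rfl⟩; exact ⟨y, hy, rfl⟩
  have hpos := hν.pos_of_ne_zero hx
  have hunit : ν ((ν x)⁻¹ • x) = 1 := by
    rw [hν.map_smul_of_nonneg (inv_nonneg.2 hpos.le), inv_mul_cancel₀ hpos.ne']
  have hle : (ν x)⁻¹ * ν (L x) ≤ opNorm ν ν L := by
    refine le_csSup hbdd ⟨_, hunit, ?_⟩
    rw [map_smul, hν.map_smul_of_nonneg (inv_nonneg.2 hpos.le)]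
  rwa [inv_mul_le_iff₀ hpos, mul_comm] at hle

lemma le_opNorm_id_add_smul (hν : IsNorm ν) (L : E →ₗ[ℝ] E) (h : ℝ) (x : E) :
    ν (x + h • L x) ≤ opNorm ν ν (fun x => x + h • L x) * ν x :=
  hν.le_opNorm (LinearMap.id + h • L) x

lemma opNorm_id_add_smul_mul_le [Nontrivial E] (hν : IsNorm ν) (L : E →ₗ[ℝ] E) {θ : ℝ}
    (hθ₀ : 0 ≤ θ) (hθ₁ : θ ≤ 1) (h : ℝ) :
    opNorm ν ν (fun x => x + (θ * h) • L x) ≤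
      1 - θ + θ * opNorm ν ν (fun x => x + h • L x) := by
  refine hν.opNorm_le fun x hx => ?_
  calc ν (x + (θ * h) • L x) = ν ((1 - θ) • x + θ • (x + h • L x)) := by
        congr 1; module
    _ ≤ (1 - θ) * ν x + θ * ν (x + h • L x) := by
        grw [hν.add_le, hν.map_smul_of_nonneg (sub_nonneg.2 hθ₁), hν.map_smul_of_nonneg hθ₀]
    _ ≤ 1 - θ + θ * opNorm ν ν (fun x => x + h • L x) := by
        grw [hν.le_opNorm_id_add_smul L h x, hx]; simp

lemma monotoneOn_opNorm_id_add_smul_slope [Nontrivial E] (hν : IsNorm ν) (L : E →ₗ[ℝ] E) :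
    MonotoneOn (fun h => (opNorm ν ν (fun x => x + h • L x) - 1) / h) (Ioi 0) := by
  intro h₁ (h₁pos : 0 < h₁) h₂ (h₂pos : 0 < h₂) h₁₂
  have key := hν.opNorm_id_add_smul_mul_le L (div_nonneg h₁pos.le h₂pos.le)
    ((div_le_one h₂pos).2 h₁₂) h₂
  rw [div_mul_cancel₀ _ h₂pos.ne'] at key
  rw [div_le_div_iff₀ h₁pos h₂pos]
  calc (opNorm ν ν (fun x => x + h₁ • L x) - 1) * h₂
      ≤ h₁ / h₂ * (opNorm ν ν (fun x => x + h₂ • L x) - 1) * h₂ := by gcongr; linarith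
    _ = _ := by field_simp

lemma exists_hasMatMeasure [Nontrivial E] (hν : IsNorm ν) (L : E →ₗ[ℝ] E) :
    ∃ μ, HasMatMeasure ν L μ := by
  obtain ⟨u, hu⟩ := hν.exists_eq_one
  refine ⟨_, (hν.monotoneOn_opNorm_id_add_smul_slope L).tendsto_nhdsGT
    ⟨-ν (L u), ?_⟩⟩
  rintro _ ⟨h, hh : 0 < h, rfl⟩
  have hlow : 1 - h * ν (L u) ≤ opNorm ν ν (fun x => x + h • L x) := by
    have htri := map_sub_le_add hν.toSeminorm (u + h • L u) (h • L u)
    simp only [coe_toSeminorm, add_sub_cancel_right, hu, hν.map_smul_of_nonneg hh.le] at htri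
    have := hν.le_opNorm_id_add_smul L h u
    rw [hu, mul_one] at this
    linarith
  rw [le_div_iff₀ hh]
  linarith

end IsNorm

/-- `D⁺V(t) ≤ D` for the upper right Dini derivative `D⁺V(t) = limsup_{s → t⁺} (V s - V t)/(s - t)`,
stated without `limsup` so that no boundedness side conditions arise. -/
def UpperRightDiniLE (V : ℝ → ℝ) (t D : ℝ) : Prop :=
  ∀ η > 0, ∀ᶠ s in 𝓝[>] t, V s ≤ V t + (s - t) * (D + η)

namespace UpperRightDiniLE

variable {V : ℝ → ℝ} {t D : ℝ}

lemma mono (h : UpperRightDiniLE V t D) {D' : ℝ} (hD : D ≤ D') :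
    UpperRightDiniLE V t D' := by
  intro η hη
  filter_upwards [h η hη, self_mem_nhdsWithin] with s hs (hts : t < s)
  grw [hs, hD]
  exact (sub_pos.2 hts).le

lemma eventually_lt (h : UpperRightDiniLE V t D) {φ : ℝ → ℝ} {φ' : ℝ}
    (hφ : HasDerivAt φ φ' t) (hle : V t ≤ φ t) (hD : D < φ') : ∀ᶠ s in 𝓝[>] t, V s < φ s := by
  have hslope : ∀ᶠ s in 𝓝[>] t, (D + φ') / 2 < slope φ t s :=
    ((hasDerivAt_iff_tendsto_slope.1 hφ).mono_left
      (nhdsWithin_mono _ fun s hs => ne_of_gt hs)).eventually (lt_mem_nhds (by linarith))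
  filter_upwards [h ((φ' - D) / 2) (by linarith), hslope, self_mem_nhdsWithin]
    with s hV hφs (hts : t < s)
  rw [slope_def_field, lt_div_iff₀ (sub_pos.2 hts)] at hφs
  linarith

end UpperRightDiniLE

lemma tendsto_sub_nhdsGT (t : ℝ) : Tendsto (fun s => s - t) (𝓝[>] t) (𝓝[>] 0) := by
  refine tendsto_nhdsWithin_of_tendsto_nhds_of_eventually_within _ ?_ ?_
  · simpa using ((continuous_sub_right t).tendsto t).mono_left nhdsWithin_le_nhds
  · filter_upwards [self_mem_nhdsWithin] with s (hs : t < s)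
    exact sub_pos.2 hs

namespace IsNorm

variable {E : Type*} [NormedAddCommGroup E] [NormedSpace ℝ E] [FiniteDimensional ℝ E]
  {ν : E → ℝ}

lemma map_add_smul_le (hν : IsNorm ν) (L : E →ₗ[ℝ] E) (x u r : E) {h : ℝ} (hh : 0 < h) :
    ν (x + h • (L x + u + r)) ≤
      ν x + h * ((opNorm ν ν (fun x => x + h • L x) - 1) / h * ν x + ν u + ν r) := by
  have hsplit : x + h • (L x + u + r) = (x + h • L x) + (h • u + h • r) := by module
  rw [hsplit, mul_add, mul_add, ← mul_assoc, mul_div_cancel₀ _ hh.ne',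
    ← hν.map_smul_of_nonneg hh.le u, ← hν.map_smul_of_nonneg hh.le r]
  grw [hν.add_le, hν.add_le (h • u), hν.le_opNorm_id_add_smul L h x]
  linarith

lemma upperRightDiniLE_of_hasMatMeasure (hν : IsNorm ν) {L : E →ₗ[ℝ] E} {μ : ℝ}
    (hμ : HasMatMeasure ν L μ) {e : ℝ → E} {u : E} {t : ℝ}
    (he : HasDerivAt e (L (e t) + u) t) :
    UpperRightDiniLE (fun s => ν (e s)) t (μ * ν (e t) + ν u) := by
  intro η hη
  have hQ : Tendsto (fun s => (opNorm ν ν (fun x => x + (s - t) • L x) - 1) / (s - t))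
      (𝓝[>] t) (𝓝 μ) := hμ.comp (tendsto_sub_nhdsGT t)
  have hR : Tendsto (fun s => ν (slope e t s - (L (e t) + u))) (𝓝[>] t) (𝓝 0) := by
    have hslope : Tendsto (slope e t) (𝓝[>] t) (𝓝 (L (e t) + u)) :=
      (hasDerivAt_iff_tendsto_slope.1 he).mono_left
      (nhdsWithin_mono _ fun s hs => ne_of_gt hs)
    have hcont := (hν.continuous.tendsto 0).comp (tendsto_sub_nhds_zero_iff.2 hslope)
    rwa [hν.map_zero] at hcont
  have hlim := ((hQ.mul_const (ν (e t))).add_const (ν u)).add hR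
  rw [add_zero] at hlim
  filter_upwards [hlim.eventually (gt_mem_nhds (lt_add_of_pos_right _ hη)),
    self_mem_nhdsWithin] with s hs (hts : t < s)
  have hes : e s = e t + (s - t) • (L (e t) + u + (slope e t s - (L (e t) + u))) := by
    rw [add_sub_cancel, sub_smul_slope, vsub_eq_sub, add_sub_cancel]
  rw [hes]
  refine (hν.map_add_smul_le L (e t) u _ (sub_pos.2 hts)).trans ?_
  gcongr

lemma upperRightDiniLE_of_hasDerivAt (hν : IsNorm ν) {L : E →ₗ[ℝ] E} {c : ℝ}
    (hL : ∀ r, HasMatMeasure ν L r → r ≤ c) {e : ℝ → E} {u : E} {t : ℝ}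
    (he : HasDerivAt e (L (e t) + u) t) :
    UpperRightDiniLE (fun s => ν (e s)) t (c * ν (e t) + ν u) := by
  rcases subsingleton_or_nontrivial E with hE | hE
  -- on the zero space no matrix measure exists: `opNorm` is `sSup ∅ = 0`
  · intro η hη
    filter_upwards [self_mem_nhdsWithin] with s (hts : t < s)
    simp only [Subsingleton.elim _ (0 : E), hν.map_zero]
    nlinarith
  obtain ⟨μ, hμ⟩ := hν.exists_hasMatMeasure L
  exact (hν.upperRightDiniLE_of_hasMatMeasure hμ he).mono
    (by gcongr; exacts [hν.nonneg _, hL μ hμ])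

lemma upperRightDiniLE_of_hasDerivAt_delay (hν : IsNorm ν) {L K : E →ₗ[ℝ] E} {a b W : ℝ}
    (hL : ∀ r, HasMatMeasure ν L r → r ≤ -a) (hK : opNorm ν ν K ≤ b) {e : ℝ → E} {y u : E}
    {t : ℝ} (hu : ν u ≤ W) (he : HasDerivAt e (L (e t) + K y + u) t) :
    UpperRightDiniLE (fun s => ν (e s)) t (-a * ν (e t) + b * ν y + W) := by
  rw [add_assoc] at he
  refine (hν.upperRightDiniLE_of_hasDerivAt hL he).mono ?_
  grw [add_assoc, hν.add_le, hν.le_opNorm K y, hK, hu]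
  exact hν.nonneg y

end IsNorm

lemma forall_le_of_eventually_lt_of_eq {V φ : ℝ → ℝ} {a : ℝ} (hV : ContinuousOn V (Ici a))
    (hφ : ContinuousOn φ (Ici a)) (ha : V a < φ a)
    (step : ∀ t, a ≤ t → (∀ s ∈ Icc a t, V s ≤ φ s) → V t = φ t →
      ∀ᶠ s in 𝓝[>] t, V s < φ s) :
    ∀ t, a ≤ t → V t ≤ φ t := by
  by_contra! ⟨T, hTa, hT⟩
  set t₁ := sInf {x | a ≤ x ∧ φ x < V x}
  have hne : {x | a ≤ x ∧ φ x < V x}.Nonempty := ⟨T, hTa, hT⟩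
  have hbdd : BddBelow {x | a ≤ x ∧ φ x < V x} := ⟨a, fun x hx => hx.1⟩
  have ha₁ : a ≤ t₁ := le_csInf hne fun x hx => hx.1
  have hbefore : ∀ s ∈ Ico a t₁, V s ≤ φ s := fun s hs =>
    not_lt.1 fun h => not_le.2 hs.2 (csInf_le hbdd ⟨hs.1, h⟩)
  have hcont : ContinuousWithinAt (fun x => V x - φ x) (Ici a) t₁ := (hV.sub hφ) t₁ ha₁
  have hle₁ : V t₁ ≤ φ t₁ := by
    rcases ha₁.eq_or_lt with h | h
    · exact h ▸ ha.le
    have hleft : Tendsto (fun x => V x - φ x) (𝓝[<] t₁) (𝓝 (V t₁ - φ t₁)) := by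
      rw [← nhdsWithin_Ico_eq_nhdsLT h]
      exact (hcont.mono Ico_subset_Ici_self).tendsto
    have := le_of_tendsto hleft <| by
      filter_upwards [Ico_mem_nhdsLT h] with s hs
      exact sub_nonpos.2 (hbefore s hs)
    linarith
  have hnext : ∀ᶠ s in 𝓝[>] t₁, V s < φ s := by
    rcases hle₁.lt_or_eq with hlt | heq
    · have hev := (hcont.mono (Ioi_subset_Ici ha₁)).eventually (gt_mem_nhds (sub_neg.2 hlt))
      filter_upwards [hev] with s hs
      exact sub_neg.1 hs
    · refine step t₁ ha₁ (fun s hs => ?_) heq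
      rcases hs.2.lt_or_eq with h | rfl
      exacts [hbefore s ⟨hs.1, h⟩, hle₁]
  obtain ⟨u, hu, hsub⟩ := mem_nhdsGT_iff_exists_Ioo_subset.1 hnext
  have : u ≤ t₁ := le_csInf hne fun x ⟨hax, hx⟩ => by
    by_contra! hxu
    rcases (csInf_le hbdd ⟨hax, hx⟩).lt_or_eq with h | h
    · exact (hsub ⟨h, hxu⟩).not_gt hx
    · rw [← h] at hx
      exact hle₁.not_gt hx
  exact (not_le.2 hu) this

open Real in
theorem halanay_inequality {V τ : ℝ → ℝ} {t₀ τmax a b W M lam : ℝ} (hb : 0 ≤ b)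
    (hab : b < a) (hW : 0 ≤ W) (hM : 0 ≤ M) (hlam : 0 ≤ lam)
    (hτ : ∀ t, t₀ ≤ t → 0 ≤ τ t ∧ τ t ≤ τmax)
    (hV : ContinuousOn V (Ici t₀)) (hVinit : ∀ s ∈ Icc (t₀ - τmax) t₀, V s ≤ M)
    (hchar : ∀ t, t₀ ≤ t → b * exp (lam * τ t) ≤ a - lam)
    (hD : ∀ t, t₀ ≤ t → UpperRightDiniLE V t (-a * V t + b * V (t - τ t) + W)) :
    ∀ t, t₀ ≤ t → V t ≤ M * exp (-lam * (t - t₀)) + W / (a - b) := by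
  intro t ht
  refine le_of_forall_pos_le_add fun ε hε => ?_
  set C := W / (a - b)
  have hCW : (a - b) * C = W := mul_div_cancel₀ W (sub_pos.2 hab).ne'
  have hC : 0 ≤ C := div_nonneg hW (sub_pos.2 hab).le
  set φ := fun s => M * exp (-lam * (s - t₀)) + C + ε
  have hφ : ∀ s, HasDerivAt φ (-lam * (M * exp (-lam * (s - t₀)))) s := fun s => by
    have := ((((hasDerivAt_id s).sub_const t₀).const_mul (-lam)).exp.const_mul M
      ).add_const C |>.add_const ε
    exact this.congr_deriv (by simp only [id]; ring)
  suffices ∀ s, t₀ ≤ s → V s ≤ φ s from this t ht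
  have hinit : V t₀ < φ t₀ := by
    have := hVinit t₀ ⟨by linarith [(hτ t₀ le_rfl).1, (hτ t₀ le_rfl).2], le_rfl⟩
    simp only [φ, sub_self, mul_zero, exp_zero, mul_one]
    linarith
  refine forall_le_of_eventually_lt_of_eq hV (by fun_prop) hinit ?_
  intro s hs hbelow heq
  obtain ⟨hτ₀, hτmax⟩ := hτ s hs
  have hdelay : V (s - τ s) ≤ M * exp (-lam * (s - t₀)) * exp (lam * τ s) + C + ε := by
    have hexp : exp (-lam * (s - τ s - t₀)) = exp (-lam * (s - t₀)) * exp (lam * τ s) := by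
      rw [← exp_add]; ring_nf
    rw [mul_assoc, ← hexp]
    rcases lt_or_ge (s - τ s) t₀ with h | h
    · have : M ≤ M * exp (-lam * (s - τ s - t₀)) :=
        le_mul_of_one_le_right hM (one_le_exp (by nlinarith))
      linarith [hVinit (s - τ s) ⟨by linarith, h.le⟩]
    · exact hbelow _ ⟨h, by linarith⟩
  refine (hD s hs).eventually_lt (hφ s) heq.le ?_
  -- `hchar` absorbs the delayed exponential and `(a - b) C = W` the input, leaving `-(a - b) ε`
  have hX : 0 ≤ M * exp (-lam * (s - t₀)) := by positivity
  have := mul_le_mul_of_nonneg_left (hchar s hs) hX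
  have := mul_le_mul_of_nonneg_left hdelay hb
  rw [heq]
  nlinarith

section DelayCharacteristic

open Real

variable {a b : ℝ}

lemma exists_pos_le_of_delay_char_eq_zero (τmax : ℝ) (hb : 0 ≤ b) (hab : b < a) :
    ∃ δ > 0, ∀ l τ, 0 < l → τ ≤ τmax → l - a + b * exp (l * τ) = 0 → δ ≤ l := by
  have hcont : Continuous fun l => l - a + b * exp (l * τmax) := by fun_prop
  have hneg : 0 - a + b * exp (0 * τmax) < 0 := by simp; linarith
  obtain ⟨δ, hδ, hball⟩ := Metric.eventually_nhds_iff.1 (hcont.continuousAt.eventually_lt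
    continuousAt_const hneg)
  refine ⟨δ, hδ, fun l τ hl hτ hroot => ?_⟩
  by_contra! hlt
  have hnegl := hball (show dist l 0 < δ by rwa [Real.dist_0_eq_abs, abs_of_pos hl])
  have := exp_le_exp.2 (mul_le_mul_of_nonneg_left hτ hl.le)
  nlinarith

lemma sInf_delay_char_roots {τmax t₀ : ℝ} {τ lam : ℝ → ℝ} (hb : 0 ≤ b) (hab : b < a)
    (hτ : ∀ t, t₀ ≤ t → 0 ≤ τ t ∧ τ t ≤ τmax)
    (hlam : ∀ t, t₀ ≤ t → 0 < lam t ∧ lam t - a + b * exp (lam t * τ t) = 0) :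
    0 < sInf (lam '' Ici t₀) ∧
      ∀ t, t₀ ≤ t → b * exp (sInf (lam '' Ici t₀) * τ t) ≤ a - sInf (lam '' Ici t₀) := by
  obtain ⟨δ, hδ, hlow⟩ := exists_pos_le_of_delay_char_eq_zero τmax hb hab
  have hδlam : δ ∈ lowerBounds (lam '' Ici t₀) := by
    rintro _ ⟨t, ht, rfl⟩
    exact hlow _ _ (hlam t ht).1 (hτ t ht).2 (hlam t ht).2
  have hle : ∀ t, t₀ ≤ t → sInf (lam '' Ici t₀) ≤ lam t := fun t ht =>
    csInf_le ⟨δ, hδlam⟩ ⟨t, ht, rfl⟩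
  refine ⟨hδ.trans_le (le_csInf ⟨_, t₀, mem_Ici.2 le_rfl, rfl⟩ hδlam), fun t ht => ?_⟩
  have hexp := exp_le_exp.2 (mul_le_mul_of_nonneg_right (hle t ht) (hτ t ht).1)
  nlinarith [(hlam t ht).2, hle t ht]

end DelayCharacteristic

/-- **input-to-state estimate for delayed linear time-varying systems.**
Let `e` be continuous on `[t₀−τ_max, ∞)`, bounded on `[t₀−τ_max, t₀]`, and satisfy
`ė(t) = A(t)e(t) + B(t)e(t−τ(t)) + w(t)` for `t ≥ t₀` with `w` bounded.  If
`μ(A(t)) ≤ −σ̄` and `‖B(t)‖ ≤ σ̲` for all `t ≥ t₀`, where `0 ≤ σ̲ < σ̄ < ∞`, then `λ̂ > 0`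
and for all `t ≥ t₀`,
`|e(t)| ≤ (sup_{t₀−τ_max≤s≤t₀}|e(s)|)·e^{−λ̂(t−t₀)} + (sup_{s≥t₀}|w(s)|)/(σ̄−σ̲)`,
where `λ̂ = inf_{t≥t₀} {λ > 0 : λ − σ̄ + σ̲·e^{λτ(t)} = 0}`. -/
theorem iss_delayed_ltv_contraction
    {m : ℕ} (t0 τmax : ℝ) (hτmax : 0 ≤ τmax)
    (τ : ℝ → ℝ) (hτ : ∀ t, 0 ≤ τ t ∧ τ t ≤ τmax)
    (e w : ℝ → Fin m → ℝ) (A B : ℝ → Matrix (Fin m) (Fin m) ℝ)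
    (ν : (Fin m → ℝ) → ℝ) (hν : IsNorm ν)
    (σlo σhi : ℝ) (hσlo : 0 ≤ σlo) (hσ : σlo < σhi)
    (he_cont : ContinuousOn e (Ici (t0 - τmax)))
    (he_bdd : BddAbove ((fun s => ν (e s)) '' Icc (t0 - τmax) t0))
    (hw_bdd : BddAbove ((fun s => ν (w s)) '' Ici t0))
    (hderiv : ∀ t, t0 ≤ t →
      HasDerivAt e ((A t).mulVec (e t) + (B t).mulVec (e (t - τ t)) + w t) t)
    (hA : ∀ t, t0 ≤ t → ∀ r, HasMatMeasure ν (A t).mulVec r → r ≤ -σhi)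
    (hB : ∀ t, t0 ≤ t → opNorm ν ν (B t).mulVec ≤ σlo)
    (lam : ℝ → ℝ)
    (hlam : ∀ t, t0 ≤ t → 0 < lam t ∧ lam t - σhi + σlo * Real.exp (lam t * τ t) = 0)
    (lamHat : ℝ) (hlamHat : lamHat = sInf (lam '' Ici t0)) :
    0 < lamHat ∧
      ∀ t, t0 ≤ t →
        ν (e t) ≤ sSup ((fun s => ν (e s)) '' Icc (t0 - τmax) t0)
              * Real.exp (-lamHat * (t - t0))
            + sSup ((fun s => ν (w s)) '' Ici t0) / (σhi - σlo) := by
  obtain ⟨hlamHat_pos, hchar⟩ := hlamHat ▸ sInf_delay_char_roots hσlo hσ (fun t _ => hτ t) hlam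
  set M := sSup ((fun s => ν (e s)) '' Icc (t0 - τmax) t0)
  set W := sSup ((fun s => ν (w s)) '' Ici t0)
  have hVinit : ∀ s ∈ Icc (t0 - τmax) t0, ν (e s) ≤ M := fun s hs => le_csSup he_bdd ⟨s, hs, rfl⟩
  have hwW : ∀ s, t0 ≤ s → ν (w s) ≤ W := fun s hs => le_csSup hw_bdd ⟨s, hs, rfl⟩
  have hM : 0 ≤ M := (hν.nonneg _).trans (hVinit t0 ⟨by linarith, le_rfl⟩)
  have hW : 0 ≤ W := (hν.nonneg _).trans (hwW t0 le_rfl)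
  have hV : ContinuousOn (fun s => ν (e s)) (Ici t0) :=
    (hν.continuous.comp_continuousOn he_cont).mono (Ici_subset_Ici.2 (by linarith))
  have hD (t : ℝ) (ht : t0 ≤ t) :=
    hν.upperRightDiniLE_of_hasDerivAt_delay (L := (A t).mulVecLin) (K := (B t).mulVecLin)
      (a := σhi) (b := σlo) (hA t ht) (hB t ht) (hwW t ht) (hderiv t ht)
  exact ⟨hlamHat_pos, halanay_inequality hσlo hσ hW hM hlamHat_pos.le (fun t _ => hτ t) hV
    hVinit hchar hD⟩
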